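/- arXiv:2509.16868 — 7 statements merged into one kernel-verified Lean document; each statement's English description precedes it below -/
import Mathlib

section
/- For a one-variable polynomial P(t) = Σ_{k=0}^{d} c_k t^k with nonnegative real coefficients and c_d ≠ 0, the sequence (c_k) is log-concave (c_{a}·c_{a+2} ≤ c_{a+1}² for all 0 ≤ a ≤ d−2) if and only if for every 0 ≤ a ≤ d−2, the Hessian of the quadratic form ∂^{d−2}N(Homog(P))/∂z^{d−2−a}∂t^{a}, namely the matrix [[c_a, c_{a+1}],[c_{a+1}, c_{a+2}]], has at most one positive eigenvalue. -/
/-- The left side is the smaller eigenvalue of `[[x, z], [z, y]]`; the identity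
`(x + y)² - ((x - y)² + 4z²) = 4(xy - z²)` compares it with the determinant. -/
theorem min_eigenvalue_nonpos_iff_mul_le_sq {x y z : ℝ} (htrace : 0 ≤ x + y) :
    ((x + y) - √((x - y) ^ 2 + 4 * z ^ 2)) / 2 ≤ 0 ↔ x * y ≤ z ^ 2 := by
  have hdiscr : (x + y) ^ 2 ≤ (x - y) ^ 2 + 4 * z ^ 2 ↔ x * y ≤ z ^ 2 := by
    constructor <;> intro h <;> linarith
  rw [div_le_iff₀ two_pos, zero_mul, sub_nonpos, Real.le_sqrt htrace (by positivity), hdiscr]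

theorem logConcave_iff_hessians_general (d : ℕ) (c : ℕ → ℝ)
    (hnonneg : ∀ k, 0 ≤ c k) :
    (∀ a : ℕ, a + 2 ≤ d → c a * c (a + 2) ≤ (c (a + 1)) ^ 2) ↔
    (∀ a : ℕ, a + 2 ≤ d →
      ((c a + c (a + 2)) - Real.sqrt ((c a - c (a + 2)) ^ 2 + 4 * (c (a + 1)) ^ 2)) / 2 ≤ 0) :=
  forall₂_congr fun a _ =>
    (min_eigenvalue_nonpos_iff_mul_le_sq (add_nonneg (hnonneg a) (hnonneg (a + 2)))).symm

/-- For `P(t) = Σ_{k=0}^d c_k t^k` with nonnegative coefficients and `c d ≠ 0`, the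
sequence of coefficients is log-concave iff for every `0 ≤ a ≤ d-2` the Hessian
`[[c_a, c_{a+1}], [c_{a+1}, c_{a+2}]]` of the corresponding quadratic form has at most
one positive eigenvalue, i.e. its smaller eigenvalue is nonpositive. -/
theorem logConcave_iff_hessians (d : ℕ) (c : ℕ → ℝ)
    (hnonneg : ∀ k, 0 ≤ c k) (hd : c d ≠ 0) :
    (∀ a : ℕ, a + 2 ≤ d → c a * c (a + 2) ≤ (c (a + 1)) ^ 2) ↔
    (∀ a : ℕ, a + 2 ≤ d →
      ((c a + c (a + 2)) - Real.sqrt ((c a - c (a + 2)) ^ 2 + 4 * (c (a + 1)) ^ 2)) / 2 ≤ 0) :=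
  logConcave_iff_hessians_general d c hnonneg
end

section
/- For every integer n ≥ 1, the Links–Gould polynomial of the (2,n)-torus link satisfies LG(T(2,n)) = (−1)^{n−1} + Σ_{k=2}^{n} ( t₁^{n−k} t₀ Σ_{l=0}^{k−2} t₀^l (−1)^{k−2−l} − t₁^{n−k+1} Σ_{m=0}^{k−1} t₀^m (−1)^{k−1−m} ), where LG(T(2,n)) is defined recursively via the skein evaluation: LG(T(2,n)) = A_n·(t₀+t₁−t₀t₁−1) − B_n with A_n = (−1)^n/((t₀+1)(t₁+1)) + t₀^n/((t₀+1)(t₀−t₁)) + t₁^n/((t₁+1)(t₁−t₀)) and B_n = (−1)^n(t₀+t₁)/((t₀+1)(t₁+1)) + t₀^n(t₁−1)/((t₀+1)(t₀−t₁)) + t₁^n(t₀−1)/((t₁+1)(t₁−t₀)). -/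
/-!
Both sides satisfy the recurrence `x (n + 1) = t₁ x n + c n` with
`c n = (-1)^n (1 + t₁) + t₀ G n - t₁ G (n + 1)`, where `G m = ∑_{l<m} t₀^l (-1)^(m-1-l)`,
and both equal `1` at `n = 1`. For the closed formula the recurrence comes from splitting off
the top summand `k = n + 1`; for the skein expression it is a rational-function identity once
`G m = (t₀^m - (-1)^m) / (t₀ + 1)` is substituted.
-/

open Finset

section
variable {F : Type*}

def lgTorusSkein [Field F] (t0 t1 : F) (n : ℕ) : F :=
  ((-1 : F) ^ n / ((t0 + 1) * (t1 + 1))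
        + t0 ^ n / ((t0 + 1) * (t0 - t1))
        + t1 ^ n / ((t1 + 1) * (t1 - t0))) * (t0 + t1 - t0 * t1 - 1)
      - ((-1 : F) ^ n * (t0 + t1) / ((t0 + 1) * (t1 + 1))
        + t0 ^ n * (t1 - 1) / ((t0 + 1) * (t0 - t1))
        + t1 ^ n * (t0 - 1) / ((t1 + 1) * (t1 - t0)))

def lgTorusClosed [CommRing F] (t0 t1 : F) (n : ℕ) : F :=
  (-1 : F) ^ (n - 1)
      + ∑ k ∈ Icc 2 n,
          (t1 ^ (n - k) * t0 * ∑ l ∈ range (k - 1), t0 ^ l * (-1 : F) ^ (k - 2 - l)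
            - t1 ^ (n - k + 1) * ∑ m ∈ range k, t0 ^ m * (-1 : F) ^ (k - 1 - m))

theorem lgTorusClosed_one [CommRing F] (t0 t1 : F) : lgTorusClosed t0 t1 1 = 1 := by
  simp [lgTorusClosed]

theorem lgTorusClosed_succ [CommRing F] (t0 t1 : F) {n : ℕ} (hn : 1 ≤ n) :
    lgTorusClosed t0 t1 (n + 1) = t1 * lgTorusClosed t0 t1 n + (-1) ^ n * (1 + t1)
      + t0 * ∑ l ∈ range n, t0 ^ l * (-1 : F) ^ (n - 1 - l)
      - t1 * ∑ m ∈ range (n + 1), t0 ^ m * (-1 : F) ^ (n + 1 - 1 - m) := by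
  have hsign : (-1 : F) ^ (n - 1) = -(-1) ^ n := by
    obtain ⟨n, rfl⟩ := Nat.exists_eq_add_of_le' hn
    simp [pow_succ]
  have hshift : ∀ k ∈ Icc 2 n,
      t1 ^ (n + 1 - k) * t0 * ∑ l ∈ range (k - 1), t0 ^ l * (-1 : F) ^ (k - 2 - l)
          - t1 ^ (n + 1 - k + 1) * ∑ m ∈ range k, t0 ^ m * (-1 : F) ^ (k - 1 - m)
        = t1 * (t1 ^ (n - k) * t0 * ∑ l ∈ range (k - 1), t0 ^ l * (-1 : F) ^ (k - 2 - l)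
          - t1 ^ (n - k + 1) * ∑ m ∈ range k, t0 ^ m * (-1 : F) ^ (k - 1 - m)) := by
    intro k hk
    rw [show n + 1 - k = n - k + 1 by grind]
    ring
  have htop : ∀ l, n + 1 - 2 - l = n - 1 - l := fun l => by omega
  rw [lgTorusClosed, sum_Icc_succ_top (by omega), sum_congr rfl hshift, ← mul_sum,
    lgTorusClosed, hsign]
  simp only [Nat.add_sub_cancel, Nat.sub_self, htop]
  ring

theorem lgTorusSkein_succ [Field F] {t0 t1 : F} (h0 : t0 + 1 ≠ 0) (h1 : t1 + 1 ≠ 0)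
    (h01 : t0 - t1 ≠ 0) (n : ℕ) :
    lgTorusSkein t0 t1 (n + 1) = t1 * lgTorusSkein t0 t1 n + (-1) ^ n * (1 + t1)
      + t0 * ∑ l ∈ range n, t0 ^ l * (-1 : F) ^ (n - 1 - l)
      - t1 * ∑ m ∈ range (n + 1), t0 ^ m * (-1 : F) ^ (n + 1 - 1 - m) := by
  have h10 : t1 - t0 ≠ 0 := sub_ne_zero.mpr (sub_ne_zero.mp h01).symm
  have hgeom (m : ℕ) : ∑ l ∈ range m, t0 ^ l * (-1 : F) ^ (m - 1 - l)
      = (t0 ^ m - (-1) ^ m) / (t0 + 1) := by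
    rw [eq_div_iff h0, ← sub_neg_eq_add, geom_sum₂_mul]
  rw [hgeom, hgeom, lgTorusSkein, lgTorusSkein]
  field_simp
  ring

theorem lgTorusSkein_one [Field F] {t0 t1 : F} (h0 : t0 + 1 ≠ 0) (h1 : t1 + 1 ≠ 0)
    (h01 : t0 - t1 ≠ 0) : lgTorusSkein t0 t1 1 = 1 := by
  have h10 : t1 - t0 ≠ 0 := sub_ne_zero.mpr (sub_ne_zero.mp h01).symm
  rw [lgTorusSkein]
  field_simp
  ring

end

/-- The skein evaluation of the Links–Gould invariant of the `(2,n)`-torus link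
equals the closed formula, as an identity of rational expressions:
`A_n (t₀+t₁−t₀t₁−1) − B_n = (−1)^{n−1} + Σ_{k=2}^n (…)`. -/
theorem LG_torus_link_formula (F : Type*) [Field F] (t0 t1 : F)
    (h0 : t0 + 1 ≠ 0) (h1 : t1 + 1 ≠ 0) (h01 : t0 - t1 ≠ 0)
    (n : ℕ) (hn : 1 ≤ n) :
    ((-1 : F) ^ n / ((t0 + 1) * (t1 + 1))
        + t0 ^ n / ((t0 + 1) * (t0 - t1))
        + t1 ^ n / ((t1 + 1) * (t1 - t0))) * (t0 + t1 - t0 * t1 - 1)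
      - ((-1 : F) ^ n * (t0 + t1) / ((t0 + 1) * (t1 + 1))
        + t0 ^ n * (t1 - 1) / ((t0 + 1) * (t0 - t1))
        + t1 ^ n * (t0 - 1) / ((t1 + 1) * (t1 - t0)))
    = (-1 : F) ^ (n - 1)
      + ∑ k ∈ Finset.Icc 2 n,
          (t1 ^ (n - k) * t0 * ∑ l ∈ Finset.range (k - 1), t0 ^ l * (-1 : F) ^ (k - 2 - l)
            - t1 ^ (n - k + 1) * ∑ m ∈ Finset.range k, t0 ^ m * (-1 : F) ^ (k - 1 - m)) := by
  change lgTorusSkein t0 t1 n = lgTorusClosed t0 t1 n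
  induction n, hn using Nat.le_induction with
  | base => rw [lgTorusSkein_one h0 h1 h01, lgTorusClosed_one]
  | succ n hn ih => rw [lgTorusSkein_succ h0 h1 h01, lgTorusClosed_succ t0 t1 hn, ih]
end

section
/- The coefficients of the Links–Gould polynomial of the (2,n)-torus link, written LG(T(2,n)) = Σ a_{ij} t₀^i t₁^j via the closed formula, take absolute values only in {0, 1, 2}, and the two-indexed sequence (|a_{ij}|) is 2d log-concave: |a_{i+k,j+l}|·|a_{i−k,j−l}| ≤ |a_{ij}|² for all i,j,k,l ∈ ℤ. -/
/-!
Reading off the closed formula, the coefficient of `t₀^i t₁^j` in `LG(T(2,n))` is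
`[i = j = 0] (-1)^(n-1) + [0 < i, i + j < n] (-1)^(n-i-j-1) - [0 < j < n, i + j ≤ n] (-1)^(n-i-j)`,
and the last two terms have opposite signs wherever both occur. Hence `|a_ij| = 1_S + 1_T` for
lattice sets `T ⊆ S` cut out by linear inequalities. Both are closed under integer midpoints, and
even the midpoint of a point of `T` and a point of `S` lies in `T`, because the strict inequalities
defining `T` survive averaging with the weak ones defining `S` after rounding. These two midpoint
properties are exactly what makes `1_S + 1_T` log-concave.
-/

open MvPolynomial

/-- The Links–Gould polynomial of the `(2,n)`-torus link via the closed formula. -/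
noncomputable def LGtorus (n : ℕ) : MvPolynomial (Fin 2) ℤ :=
  C ((-1 : ℤ) ^ (n - 1)) + ∑ k ∈ Finset.Icc 2 n,
    ((X 1) ^ (n - k) * X 0 * ∑ l ∈ Finset.range (k - 1), (X 0) ^ l * C ((-1 : ℤ) ^ (k - 2 - l))
      - (X 1) ^ (n - k + 1) * ∑ m ∈ Finset.range k, (X 0) ^ m * C ((-1 : ℤ) ^ (k - 1 - m)))

/-- The coefficient of `t₀^i t₁^j` in `LG(T(2,n))`, extended by zero to all of `ℤ²`. -/
noncomputable def torusCoeff (n : ℕ) (i j : ℤ) : ℤ :=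
  if h : 0 ≤ i ∧ 0 ≤ j then
    MvPolynomial.coeff (Finsupp.single 0 i.toNat + Finsupp.single 1 j.toNat) (LGtorus n)
  else 0

section IndicatorSum

variable {α : Type*} {S T : Set α}

theorem indicator_add_indicator_mem (hTS : T ⊆ S) (x : α) :
    S.indicator 1 x + T.indicator 1 x ∈ ({0, 1, 2} : Set ℤ) := by
  by_cases hT : x ∈ T
  · simp [hT, hTS hT, one_add_one_eq_two]
  · by_cases hS : x ∈ S <;> simp [hS, hT]

theorem indicator_add_indicator_mul_le_sq [AddCommGroup α] (hTS : T ⊆ S)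
    (hS : ∀ x y, x + y ∈ S → x - y ∈ S → x ∈ S)
    (hT : ∀ x y, x + y ∈ T → x - y ∈ S → x ∈ T) (x y : α) :
    (S.indicator 1 (x + y) + T.indicator 1 (x + y)) *
        (S.indicator 1 (x - y) + T.indicator 1 (x - y))
      ≤ (S.indicator 1 x + T.indicator 1 x : ℤ) ^ 2 := by
  classical
  have hSmid := hS x y
  have hTmid := hT x y
  have hTmid' : x - y ∈ T → x + y ∈ S → x ∈ T := by
    simpa [← sub_eq_add_neg] using hT x (-y)
  have hTS_add := @hTS (x + y)
  have hTS_sub := @hTS (x - y)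
  have hTS_self := @hTS x
  simp only [Set.indicator_apply, Pi.one_apply]
  split_ifs <;> norm_num <;> tauto

end IndicatorSum

theorem abs_neg_one_pow_sub_neg_one_pow_succ {α : Type*} [Ring α] [LinearOrder α]
    [IsStrictOrderedRing α] (a : ℕ) : |(-1 : α) ^ a - (-1) ^ (a + 1)| = 2 := by
  rw [pow_succ, mul_neg_one, sub_neg_eq_add, ← two_mul, abs_mul, abs_neg_one_pow, abs_two,
    mul_one]

theorem Finsupp.single_add_single_inj {σ M : Type*} [AddZeroClass M] {a b : σ} (hab : a ≠ b)
    {i j i' j' : M} :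
    single a i + single b j = single a i' + single b j' ↔ i = i' ∧ j = j' := by
  refine ⟨fun h => ⟨?_, ?_⟩, fun h => h.1 ▸ h.2 ▸ rfl⟩
  · simpa [hab.symm] using DFunLike.congr_fun h a
  · simpa [hab] using DFunLike.congr_fun h b

theorem X_pow_mul_X_pow_mul_C {σ R : Type*} [CommSemiring R] (s t : σ) (a b : ℕ) (c : R) :
    X s ^ a * (X t ^ b * C c) = monomial (Finsupp.single t b + Finsupp.single s a) c := by
  rw [monomial_single_add, ← C_mul_X_pow_eq_monomial]
  ring

section TwoVariables

variable {R : Type*} [CommSemiring R]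

theorem coeff_X_pow_mul_sum (a K i j : ℕ) (s : ℕ → R) :
    coeff (Finsupp.single 0 i + Finsupp.single 1 j)
        (X (1 : Fin 2) ^ a * ∑ m ∈ Finset.range K, X 0 ^ m * C (s m)) =
      if a = j ∧ i < K then s i else 0 := by
  simp only [Finset.mul_sum, X_pow_mul_X_pow_mul_C, coeff_sum, coeff_monomial,
    Finsupp.single_add_single_inj (show (0 : Fin 2) ≠ 1 by decide)]
  by_cases h : a = j <;> simp [h]

theorem coeff_X_pow_mul_X_mul_sum (a K i j : ℕ) (s : ℕ → R) :
    coeff (Finsupp.single 0 i + Finsupp.single 1 j)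
        (X (1 : Fin 2) ^ a * X 0 * ∑ l ∈ Finset.range K, X 0 ^ l * C (s l)) =
      if a = j ∧ 0 < i ∧ i ≤ K then s (i - 1) else 0 := by
  have hmonomial : ∀ l (c : R), X (1 : Fin 2) ^ a * X 0 * (X 0 ^ l * C c) =
      monomial (Finsupp.single 0 (l + 1) + Finsupp.single 1 a) c := fun l c => by
    rw [← X_pow_mul_X_pow_mul_C]
    ring
  simp only [Finset.mul_sum, hmonomial, coeff_sum, coeff_monomial,
    Finsupp.single_add_single_inj (show (0 : Fin 2) ≠ 1 by decide)]
  rcases i with _ | i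
  · simp
  · by_cases h : a = j <;> simp [h]

end TwoVariables

theorem coeff_LGtorus (n i j : ℕ) :
    coeff (Finsupp.single 0 i + Finsupp.single 1 j) (LGtorus n) =
      (if i = 0 ∧ j = 0 then (-1) ^ (n - 1) else 0)
        + (if 0 < i ∧ i + j < n then (-1) ^ (n - (i + j + 1)) else 0)
        - (if 0 < j ∧ j < n ∧ i + j ≤ n then (-1) ^ (n - (i + j)) else 0) := by
  have hfirst : ∀ k ∈ Finset.Icc 2 n,
      coeff (Finsupp.single (0 : Fin 2) i + Finsupp.single 1 j) ((X 1) ^ (n - k) * X 0 *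
          ∑ l ∈ Finset.range (k - 1), (X 0) ^ l * C ((-1 : ℤ) ^ (k - 2 - l))) =
        if k = n - j then (if 0 < i ∧ i + j < n then (-1) ^ (n - (i + j + 1)) else 0) else 0 := by
    intro k hk
    rw [Finset.mem_Icc] at hk
    rw [coeff_X_pow_mul_X_mul_sum (s := fun l => (-1) ^ (k - 2 - l))]
    split_ifs <;> first | rfl | omega | (congr 1; omega)
  have hsecond : ∀ k ∈ Finset.Icc 2 n,
      coeff (Finsupp.single (0 : Fin 2) i + Finsupp.single 1 j) ((X 1) ^ (n - k + 1) *
          ∑ m ∈ Finset.range k, (X 0) ^ m * C ((-1 : ℤ) ^ (k - 1 - m))) =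
        if k = n + 1 - j then
          (if 0 < j ∧ j < n ∧ i + j ≤ n then (-1) ^ (n - (i + j)) else 0) else 0 := by
    intro k hk
    rw [Finset.mem_Icc] at hk
    rw [coeff_X_pow_mul_sum (s := fun m => (-1) ^ (k - 1 - m))]
    split_ifs <;> first | rfl | omega | (congr 1; omega)
  rw [LGtorus, coeff_add, coeff_C, coeff_sum, add_sub_assoc]
  simp only [coeff_sub]
  rw [Finset.sum_sub_distrib, Finset.sum_congr rfl hfirst, Finset.sum_congr rfl hsecond,
    Finset.sum_ite_eq', Finset.sum_ite_eq']
  simp only [eq_comm (a := (0 : Fin 2 →₀ ℕ)), add_eq_zero, Finsupp.single_eq_zero, Finset.mem_Icc]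
  split_ifs <;> first | rfl | omega

def torusSupport (n : ℕ) : Set (ℤ × ℤ) :=
  {p | 0 ≤ p.1 ∧ 0 ≤ p.2 ∧
    ((p.1 = 0 ∧ p.2 = 0) ∨ (p.2 = 0 ∧ p.1 < n) ∨ (0 < p.2 ∧ p.2 < n ∧ p.1 + p.2 ≤ n))}

def torusLevelTwo (n : ℕ) : Set (ℤ × ℤ) :=
  {p | 0 < p.1 ∧ 0 < p.2 ∧ p.1 + p.2 < n}

theorem abs_torusCoeff (n : ℕ) (i j : ℤ) :
    |torusCoeff n i j| =
      (torusSupport n).indicator 1 (i, j) + (torusLevelTwo n).indicator 1 (i, j) := by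
  classical
  simp only [Set.indicator_apply, torusSupport, torusLevelTwo, Set.mem_ofPred_eq]
  by_cases h : 0 ≤ i ∧ 0 ≤ j
  · obtain ⟨hi, hj⟩ := h
    lift i to ℕ using hi
    lift j to ℕ using hj
    rw [torusCoeff, dif_pos (by omega), Int.toNat_natCast, Int.toNat_natCast, coeff_LGtorus]
    split_ifs <;> try omega
    all_goals first
      | rw [zero_add, show n - (i + j) = n - (i + j + 1) + 1 by omega,
          abs_neg_one_pow_sub_neg_one_pow_succ, Pi.one_apply, one_add_one_eq_two]
      | simp
  · rw [torusCoeff, dif_neg h, abs_zero]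
    split_ifs <;> omega

theorem torusLevelTwo_subset_torusSupport (n : ℕ) : torusLevelTwo n ⊆ torusSupport n := by
  rintro ⟨i, j⟩
  simp only [torusLevelTwo, torusSupport, Set.mem_ofPred_eq]
  omega

theorem mem_torusSupport_of_add_of_sub (n : ℕ) (p q : ℤ × ℤ) :
    p + q ∈ torusSupport n → p - q ∈ torusSupport n → p ∈ torusSupport n := by
  obtain ⟨i, j⟩ := p
  obtain ⟨k, l⟩ := q
  simp only [torusSupport, Prod.mk_add_mk, Prod.mk_sub_mk, Set.mem_ofPred_eq]
  omega

theorem mem_torusLevelTwo_of_add_of_sub (n : ℕ) (p q : ℤ × ℤ) :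
    p + q ∈ torusLevelTwo n → p - q ∈ torusSupport n → p ∈ torusLevelTwo n := by
  obtain ⟨i, j⟩ := p
  obtain ⟨k, l⟩ := q
  simp only [torusLevelTwo, torusSupport, Prod.mk_add_mk, Prod.mk_sub_mk, Set.mem_ofPred_eq]
  omega

theorem torus_coeffs_2d_logConcave_general (n : ℕ) :
    (∀ i j : ℤ, |torusCoeff n i j| ∈ ({0, 1, 2} : Set ℤ)) ∧
    (∀ i j k l : ℤ,
      |torusCoeff n (i + k) (j + l)| * |torusCoeff n (i - k) (j - l)|
        ≤ |torusCoeff n i j| ^ 2) := by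
  refine ⟨fun i j => ?_, fun i j k l => ?_⟩
  · rw [abs_torusCoeff]
    exact indicator_add_indicator_mem (torusLevelTwo_subset_torusSupport n) _
  · simp only [abs_torusCoeff]
    exact indicator_add_indicator_mul_le_sq (torusLevelTwo_subset_torusSupport n)
      (mem_torusSupport_of_add_of_sub n) (mem_torusLevelTwo_of_add_of_sub n) (i, j) (k, l)

/-- The absolute values of the coefficients of `LG(T(2,n))` lie in `{0,1,2}` and
form a 2d log-concave two-indexed sequence. -/
theorem torus_coeffs_2d_logConcave (n : ℕ) (hn : 1 ≤ n) :
    (∀ i j : ℤ, |torusCoeff n i j| ∈ ({0, 1, 2} : Set ℤ)) ∧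
    (∀ i j k l : ℤ,
      |torusCoeff n (i + k) (j + l)| * |torusCoeff n (i - k) (j - l)|
        ≤ |torusCoeff n i j| ^ 2) :=
  torus_coeffs_2d_logConcave_general n
end

section
/- For the (2,n)-torus link with n ≥ 1, writing LG(T(2,n)) = Σ a_{ij} t₀^i t₁^j, the signs satisfy a_{ij} = (−1)^{μ+i+j+1}|a_{ij}| for all i,j, where μ = 1 if n is odd and μ = 2 if n is even (the number of components of T(2,n)). -/
open MvPolynomial

/-! The sign of every monomial of `LG(T(2,n))` is read off the closed formula: `t₀`, `t₁` and the
scalars `(-1)^e` all have coefficient signs alternating in the total degree, this property is stable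
under sums and products (adding parities), and the two families of summands have opposite parities,
which the minus sign between them compensates. -/

namespace MvPolynomial

variable {σ R : Type*} [CommRing R] [PartialOrder R]

def HasAlternatingSigns (p : ℕ) (f : MvPolynomial σ R) : Prop :=
  ∀ d : σ →₀ ℕ, 0 ≤ (-1) ^ (p + d.degree) * coeff d f

theorem HasAlternatingSigns.of_modEq {p q : ℕ} {f : MvPolynomial σ R}
    (hf : HasAlternatingSigns p f) (h : p ≡ q [MOD 2]) : HasAlternatingSigns q f := fun d => by
  have hd : (p + d.degree) % 2 = (q + d.degree) % 2 := h.add_right d.degree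
  rw [neg_one_pow_eq_pow_mod_two, ← hd, ← neg_one_pow_eq_pow_mod_two]
  exact hf d

theorem hasAlternatingSigns_C {p : ℕ} {c : R} (hc : 0 ≤ (-1) ^ p * c) :
    HasAlternatingSigns p (C c : MvPolynomial σ R) := fun d => by
  classical
  rw [coeff_C]
  split_ifs with hd
  · rwa [← hd, map_zero, add_zero]
  · rw [mul_zero]

variable [IsOrderedRing R]

namespace HasAlternatingSigns

variable {p q : ℕ} {f g : MvPolynomial σ R}

theorem add (hf : HasAlternatingSigns p f) (hg : HasAlternatingSigns p g) :
    HasAlternatingSigns p (f + g) := fun d => by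
  rw [coeff_add, mul_add]
  exact add_nonneg (hf d) (hg d)

theorem sub (hf : HasAlternatingSigns p f) (hg : HasAlternatingSigns (p + 1) g) :
    HasAlternatingSigns p (f - g) := fun d => by
  convert add_nonneg (hf d) (hg d) using 1
  rw [coeff_sub]
  ring

theorem sum {ι : Type*} {s : Finset ι} {F : ι → MvPolynomial σ R}
    (hF : ∀ i ∈ s, HasAlternatingSigns p (F i)) : HasAlternatingSigns p (∑ i ∈ s, F i) :=
  fun d => by
    rw [coeff_sum, Finset.mul_sum]
    exact Finset.sum_nonneg fun i hi => hF i hi d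

theorem mul (hf : HasAlternatingSigns p f) (hg : HasAlternatingSigns q g) :
    HasAlternatingSigns (p + q) (f * g) := fun d => by
  classical
  rw [coeff_mul, Finset.mul_sum]
  refine Finset.sum_nonneg fun x hx => ?_
  rw [← Finset.HasAntidiagonal.mem_antidiagonal.mp hx, map_add]
  calc (0 : R) ≤ ((-1) ^ (p + x.1.degree) * coeff x.1 f) * ((-1) ^ (q + x.2.degree) * coeff x.2 g) :=
        mul_nonneg (hf x.1) (hg x.2)
    _ = _ := by ring

end HasAlternatingSigns

theorem hasAlternatingSigns_C_neg_one_pow (p : ℕ) :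
    HasAlternatingSigns p (C ((-1) ^ p) : MvPolynomial σ R) :=
  hasAlternatingSigns_C (by rw [← pow_add, (Even.add_self p).neg_one_pow]; exact zero_le_one)

theorem hasAlternatingSigns_X_pow (i : σ) (k : ℕ) :
    HasAlternatingSigns k (X i ^ k : MvPolynomial σ R) := fun d => by
  classical
  rw [coeff_X_pow]
  split_ifs with hd
  · rw [← hd, Finsupp.degree_single, mul_one, (Even.add_self k).neg_one_pow]
    exact zero_le_one
  · rw [mul_zero]

theorem hasAlternatingSigns_X (i : σ) : HasAlternatingSigns 1 (X i : MvPolynomial σ R) := by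
  simpa using hasAlternatingSigns_X_pow (R := R) i 1

theorem hasAlternatingSigns_sum_X_pow_mul_C_neg_one_pow (i : σ) (e : ℕ) :
    HasAlternatingSigns e (∑ l ∈ Finset.range (e + 1), X i ^ l * C ((-1 : R) ^ (e - l))) :=
  HasAlternatingSigns.sum fun l hl => by
    have hle : l ≤ e := Nat.lt_succ_iff.mp (Finset.mem_range.mp hl)
    simpa only [Nat.add_sub_cancel' hle] using
      (hasAlternatingSigns_X_pow i l).mul (hasAlternatingSigns_C_neg_one_pow (R := R) (e - l))

end MvPolynomial

open MvPolynomial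

theorem eq_neg_one_pow_mul_abs {R : Type*} [CommRing R] [LinearOrder R] [IsStrictOrderedRing R]
    {p : ℕ} {c : R} (h : 0 ≤ (-1) ^ p * c) : c = (-1) ^ p * |c| := by
  rcases neg_one_pow_eq_or R p with hp | hp <;> rw [hp] at h ⊢
  · rw [one_mul] at h ⊢
    exact (abs_of_nonneg h).symm
  · rw [abs_of_nonpos (by linarith), neg_one_mul, neg_neg]

theorem hasAlternatingSigns_LGtorus {n : ℕ} (hn : 1 ≤ n) :
    HasAlternatingSigns (n + 1) (LGtorus n) := by
  refine .add ((hasAlternatingSigns_C_neg_one_pow (n - 1)).of_modEq ?_) (.sum fun k hk => ?_)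
  · simp only [Nat.ModEq]
    omega
  obtain ⟨hk2, hkn⟩ := Finset.mem_Icc.mp hk
  obtain ⟨e, rfl⟩ : ∃ e, k = e + 2 := ⟨k - 2, by omega⟩
  rw [show e + 2 - 1 = e + 1 by omega, Nat.add_sub_cancel]
  refine .sub ?_ ?_
  · refine (((hasAlternatingSigns_X_pow 1 (n - (e + 2))).mul (hasAlternatingSigns_X 0)).mul
      (hasAlternatingSigns_sum_X_pow_mul_C_neg_one_pow 0 e)).of_modEq ?_
    simp only [Nat.ModEq]
    omega
  · refine ((hasAlternatingSigns_X_pow 1 (n - (e + 2) + 1)).mul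
      (hasAlternatingSigns_sum_X_pow_mul_C_neg_one_pow 0 (e + 1))).of_modEq ?_
    simp only [Nat.ModEq]
    omega

/-- The signs of the coefficients of `LG(T(2,n))` alternate:
`a_{ij} = (−1)^{μ+i+j+1} |a_{ij}|`, where `μ` is the number of components. -/
theorem torus_coeffs_alternating (n : ℕ) (hn : 1 ≤ n)
    (μ : ℤ) (hμ : μ = if Odd n then 1 else 2) :
    ∀ i j : ℤ,
      torusCoeff n i j = ((μ + i + j + 1).negOnePow : ℤ) * |torusCoeff n i j| := by
  intro i j
  unfold torusCoeff
  split_ifs with hij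
  · set d : Fin 2 →₀ ℕ := Finsupp.single 0 i.toNat + Finsupp.single 1 j.toNat
    have hdeg : d.degree = i.toNat + j.toNat := by simp [d]
    have hsign : ((μ + i + j + 1).negOnePow : ℤ) = (-1) ^ (n + 1 + d.degree) := by
      rw [← Int.coe_negOnePow_natCast]
      congr 1
      have hdiff : μ + i + j + 1 - ((n + 1 + d.degree : ℕ) : ℤ) = μ - n := by
        push_cast [hdeg, Int.toNat_of_nonneg hij.1, Int.toNat_of_nonneg hij.2]
        ring
      rw [Int.negOnePow_eq_iff, hdiff, hμ]
      split_ifs with hodd <;> simpa [Int.even_sub, parity_simps] using hodd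
    rw [hsign]
    exact eq_neg_one_pow_mul_abs (hasAlternatingSigns_LGtorus hn d)
  · rw [abs_zero, mul_zero]
end

section
/- For every integer l ≥ 1, the Laurent polynomial LG(K_{−l}) = 1 + (2−t₀−t₁−t₀⁻¹−t₁⁻¹+t₀t₁+t₀⁻¹t₁⁻¹)·Σ_{k=0}^{l−1}(t₀t₁)^k + (4−2t₀−2t₁−2t₀⁻¹−2t₁⁻¹+t₀t₁+t₀⁻¹t₁⁻¹+t₀t₁⁻¹+t₀⁻¹t₁)·Σ_{k=0}^{l−1}(2l−2k−1)(t₀t₁)^k, written as Σ a_{ij} t₀^i t₁^j, has coefficients satisfying a_{ij} = (−1)^{i+j}|a_{ij}| for all i, j. -/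
/-- The monomial `c · t₀^i t₁^j` in the ring of Laurent polynomials in two variables. -/
noncomputable def lmon (i j c : ℤ) : AddMonoidAlgebra ℤ (ℤ × ℤ) :=
  AddMonoidAlgebra.ofCoeff (Finsupp.single (i, j) c)

/-- The Links–Gould invariant of the twist knot `K_{-l}` (`l ≥ 1`), as a Laurent
polynomial in `t₀, t₁`. -/
noncomputable def LGtwistNeg (l : ℕ) : AddMonoidAlgebra ℤ (ℤ × ℤ) :=
  lmon 0 0 1
    + (lmon 0 0 2 - lmon 1 0 1 - lmon 0 1 1 - lmon (-1) 0 1 - lmon 0 (-1) 1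
        + lmon 1 1 1 + lmon (-1) (-1) 1)
      * ∑ k ∈ Finset.range l, lmon k k 1
    + (lmon 0 0 4 - lmon 1 0 2 - lmon 0 1 2 - lmon (-1) 0 2 - lmon 0 (-1) 2
        + lmon 1 1 1 + lmon (-1) (-1) 1 + lmon 1 (-1) 1 + lmon (-1) 1 1)
      * ∑ k ∈ Finset.range l, lmon k k (2 * l - 2 * k - 1)

/-!
The sign twist `(i, j) ↦ (-1)^(i+j)` is a character of `ℤ²`, so the Laurent polynomials whose
coefficients all carry that sign are closed under sums and products: they form a subsemiring.
`LG(K_{-l})` is built by sums and products from monomials with the right sign (the weights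
`2l - 2k - 1` are positive for `k < l`), hence lies in it.
-/

namespace AddMonoidAlgebra

variable {R G : Type*} [CommSemiring R] [PartialOrder R] [IsOrderedRing R] [AddMonoid G]

def signedNonneg (χ : AddChar G R) : Subsemiring R[G] where
  carrier := {p | ∀ x, 0 ≤ χ x * p.coeff x}
  zero_mem' _ := by simp
  add_mem' {p q} hp hq x := by
    rw [coeff_add, Finsupp.add_apply, mul_add]
    exact add_nonneg (hp x) (hq x)
  one_mem' x := by
    classical
    rw [one_def, coeff_single, Finsupp.single_apply]
    split_ifs with h
    · simp [← h]
    · simp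
  mul_mem' {p q} hp hq x := by
    classical
    rw [coeff_mul, Finsupp.sum, Finset.mul_sum]
    refine Finset.sum_nonneg fun a _ => ?_
    rw [Finsupp.sum, Finset.mul_sum]
    refine Finset.sum_nonneg fun b _ => ?_
    split_ifs with h
    · calc 0 ≤ (χ a * p.coeff a) * (χ b * q.coeff b) := mul_nonneg (hp a) (hq b)
        _ = χ x * (p.coeff a * q.coeff b) := by rw [← h, AddChar.map_add_eq_mul]; ring
    · simp

theorem ofCoeff_single_mem_signedNonneg {χ : AddChar G R} {x : G} {c : R} (h : 0 ≤ χ x * c) :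
    ofCoeff (Finsupp.single x c) ∈ signedNonneg χ := by
  classical
  intro y
  rw [coeff_ofCoeff, Finsupp.single_apply]
  split_ifs with hxy
  · rwa [← hxy]
  · simp

end AddMonoidAlgebra

open AddMonoidAlgebra

def signChar : AddChar (ℤ × ℤ) ℤ where
  toFun x := ((x.1 + x.2).negOnePow : ℤ)
  map_zero_eq_one' := by simp
  map_add_eq_mul' a b := by
    rw [Prod.fst_add, Prod.snd_add, add_add_add_comm, Int.negOnePow_add, Units.val_mul]

theorem lmon_mem_signedNonneg {i j c : ℤ} (h : 0 ≤ ((i + j).negOnePow : ℤ) * c) :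
    lmon i j c ∈ signedNonneg signChar :=
  ofCoeff_single_mem_signedNonneg h

theorem neg_lmon (i j c : ℤ) : -lmon i j c = lmon i j (-c) := by
  rw [lmon, lmon, Finsupp.single_neg, ofCoeff_neg]

theorem LGtwistNeg_mem_signedNonneg (l : ℕ) : LGtwistNeg l ∈ signedNonneg signChar := by
  have diag_mem (k : ℕ) {c : ℤ} (hc : 0 ≤ c) : lmon k k c ∈ signedNonneg signChar :=
    lmon_mem_signedNonneg (by rw [← two_mul, Int.negOnePow_two_mul, Units.val_one, one_mul]; exact hc)
  unfold LGtwistNeg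
  simp only [sub_eq_add_neg, neg_lmon]
  refine add_mem (add_mem (diag_mem 0 zero_le_one) (mul_mem ?_ ?_)) (mul_mem ?_ ?_)
  · repeat refine add_mem ?_ (lmon_mem_signedNonneg (by decide))
    exact lmon_mem_signedNonneg (by decide)
  · exact sum_mem fun k _ => diag_mem k zero_le_one
  · repeat refine add_mem ?_ (lmon_mem_signedNonneg (by decide))
    exact lmon_mem_signedNonneg (by decide)
  · refine sum_mem fun k hk => diag_mem k ?_
    have := Finset.mem_range.mp hk
    omega

theorem eq_units_mul_abs_of_nonneg_mul {u : ℤˣ} {a : ℤ} (h : 0 ≤ u * a) : a = u * |a| := by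
  rcases Int.units_eq_one_or u with rfl | rfl
  · simp_all [abs_of_nonneg]
  · simp_all [abs_of_nonpos]

theorem twist_neg_coeffs_alternating_general (l : ℕ) :
    ∀ i j : ℤ,
      (LGtwistNeg l).coeff (i, j) = ((i + j).negOnePow : ℤ) * |(LGtwistNeg l).coeff (i, j)| :=
  fun i j => eq_units_mul_abs_of_nonneg_mul (LGtwistNeg_mem_signedNonneg l (i, j))

/-- The coefficients of `LG(K_{-l})` satisfy the alternating sign property
`a_{ij} = (−1)^{i+j} |a_{ij}|`. -/
theorem twist_neg_coeffs_alternating (l : ℕ) (hl : 1 ≤ l) :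
    ∀ i j : ℤ,
      (LGtwistNeg l).coeff (i, j) = ((i + j).negOnePow : ℤ) * |(LGtwistNeg l).coeff (i, j)| :=
  twist_neg_coeffs_alternating_general l
end

section
/- If P(w₁,…,w_m) is a homogeneous polynomial of degree d with w_k⁻¹·P also a polynomial (every monomial of P is divisible by w_k), then N(P) is Lorentzian if and only if N(w_k⁻¹P) is Lorentzian. -/
open MvPolynomial

/-- The normalization `N(Σ c_α w^α) = Σ (c_α/α!) w^α` of a polynomial. -/
noncomputable def normalizePoly {m : ℕ} (P : MvPolynomial (Fin m) ℝ) :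
    MvPolynomial (Fin m) ℝ :=
  ∑ α ∈ P.support, monomial α (P.coeff α / ∏ i, ((α i).factorial : ℝ))

/-- M-convexity of a set of exponent vectors. -/
def MConvexSupport {m : ℕ} (S : Set (Fin m →₀ ℕ)) : Prop :=
  ∀ α ∈ S, ∀ β ∈ S, ∀ i : Fin m, β i < α i →
    ∃ j : Fin m, α j < β j ∧
      (α - Finsupp.single i 1 + Finsupp.single j 1) ∈ S ∧
      (β - Finsupp.single j 1 + Finsupp.single i 1) ∈ S

/-- Iterated partial derivative `∂^γ = ∂_1^{γ_1} ⋯ ∂_m^{γ_m}`. -/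
noncomputable def pderivMulti {m : ℕ} (γ : Fin m → ℕ) (P : MvPolynomial (Fin m) ℝ) :
    MvPolynomial (Fin m) ℝ :=
  (List.finRange m).foldr (fun i Q => (fun R => pderiv i R)^[γ i] Q) P

/-- The Hessian matrix of a polynomial (constant terms of the second derivatives;
for a quadratic form this is the usual Hessian). -/
noncomputable def hess {m : ℕ} (P : MvPolynomial (Fin m) ℝ) : Matrix (Fin m) (Fin m) ℝ :=
  Matrix.of fun i j => MvPolynomial.coeff 0 (pderiv i (pderiv j P))

/-- A real symmetric matrix has at most one positive eigenvalue. -/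
def AtMostOnePosEigenvalue {m : ℕ} (M : Matrix (Fin m) (Fin m) ℝ) : Prop :=
  ∀ hM : M.IsHermitian, (Finset.univ.filter fun i => 0 < hM.eigenvalues i).card ≤ 1

/-- A homogeneous polynomial of degree `d` is Lorentzian (Brändén–Huh): it has
nonnegative coefficients, M-convex support, and all its `(d-2)`-fold partial
derivatives are quadratics whose Hessians have at most one positive eigenvalue. -/
def Lorentzian {m : ℕ} (d : ℕ) (P : MvPolynomial (Fin m) ℝ) : Prop :=
  P.IsHomogeneous d ∧ (∀ α, 0 ≤ P.coeff α) ∧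
  MConvexSupport {α | P.coeff α ≠ 0} ∧
  ∀ γ : Fin m → ℕ, (∑ i, γ i) = d - 2 →
    AtMostOnePosEigenvalue (hess (pderivMulti γ P))

/-!
Every monomial of `P` contains `w_k`, so dividing by `w_k` and then normalizing is the same as
normalizing and then differentiating: `N(w_k⁻¹ P) = ∂_k N(P)`. It remains to see that a
homogeneous `Q` divisible by `w_k` is Lorentzian iff `∂_k Q` is. Differentiating in `w_k` shifts
the support of `Q` by `-e_k` and rescales each coefficient by a positive factor, which preserves
nonnegativity and M-convexity. For the Hessians, `∂^γ ∂_k Q = ∂^(γ + e_k) Q` covers every `γ` with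
`γ_k ≥ 1`. If `γ_k = 0`, then `∂^γ Q` is still divisible by `w_k`, so its Hessian vanishes off the
`k`-th row and column; its quadratic form then vanishes on the hyperplane `w_k = 0`, which leaves
room for at most one positive eigenvalue.
-/

namespace MvPolynomial

variable {σ R : Type*} [CommSemiring R]

theorem X_dvd_iff_coeff_eq_zero {k : σ} {p : MvPolynomial σ R} :
    X k ∣ p ↔ ∀ α : σ →₀ ℕ, α k = 0 → p.coeff α = 0 := by
  classical
  constructor
  · rintro ⟨q, rfl⟩ α hα
    simp [coeff_X_mul', hα]
  · intro h
    rw [X_dvd_iff_modMonomial_eq_zero]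
    ext α
    by_cases hk : Finsupp.single k 1 ≤ α
    · rw [coeff_modMonomial_of_le _ hk, coeff_zero]
    · rw [coeff_modMonomial_of_not_le _ hk, coeff_zero]
      exact h α (by simpa [Finsupp.single_le_iff] using hk)

theorem X_dvd_pderiv_of_ne {i k : σ} (hik : i ≠ k) {p : MvPolynomial σ R} (hp : X k ∣ p) :
    X k ∣ pderiv i p := by
  obtain ⟨q, rfl⟩ := hp
  rw [pderiv_mul, pderiv_X_of_ne hik.symm, zero_mul, zero_add]
  exact dvd_mul_right _ _

theorem pderiv_comm (i j : σ) (p : MvPolynomial σ R) :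
    pderiv i (pderiv j p) = pderiv j (pderiv i p) := by
  obtain rfl | hij := eq_or_ne i j
  · rfl
  ext β
  simp only [coeff_pderiv, Finsupp.add_apply, Finsupp.single_eq_of_ne hij,
    Finsupp.single_eq_of_ne hij.symm, add_zero, add_right_comm β]
  ring

theorem commute_pderiv (i j : σ) :
    Function.Commute (pderiv i : MvPolynomial σ R → MvPolynomial σ R) (pderiv j) :=
  pderiv_comm i j

noncomputable def pderivFold (L : List σ) (γ : σ → ℕ) (p : MvPolynomial σ R) :
    MvPolynomial σ R :=
  L.foldr (fun i q => (pderiv i)^[γ i] q) p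

@[simp]
theorem pderivFold_cons (i : σ) (L : List σ) (γ : σ → ℕ) (p : MvPolynomial σ R) :
    pderivFold (i :: L) γ p = (pderiv i)^[γ i] (pderivFold L γ p) := rfl

theorem commute_pderiv_pderivFold (i : σ) (L : List σ) (γ : σ → ℕ) :
    Function.Commute (pderiv i : MvPolynomial σ R → MvPolynomial σ R) (pderivFold L γ) := by
  intro p
  induction L with
  | nil => rfl
  | cons j L ih =>
    simp only [pderivFold_cons]
    rw [((commute_pderiv i j).iterate_right (γ j)).eq, ih]

theorem pderivFold_add (L : List σ) (γ δ : σ → ℕ) (p : MvPolynomial σ R) :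
    pderivFold L (γ + δ) p = pderivFold L γ (pderivFold L δ p) := by
  induction L with
  | nil => rfl
  | cons i L ih =>
    simp only [pderivFold_cons, Pi.add_apply, Function.iterate_add_apply, ih,
      ((commute_pderiv_pderivFold i L γ).iterate_left (δ i)).eq]

theorem pderivFold_eq_self {L : List σ} {γ : σ → ℕ} (h : ∀ i ∈ L, γ i = 0)
    (p : MvPolynomial σ R) : pderivFold L γ p = p := by
  induction L with
  | nil => rfl
  | cons i L ih =>
    rw [pderivFold_cons, h i List.mem_cons_self, Function.iterate_zero_apply,
      ih fun j hj => h j (List.mem_cons_of_mem i hj)]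

theorem pderivFold_single [DecidableEq σ] {L : List σ} (hL : L.Nodup) {k : σ} (hk : k ∈ L)
    (p : MvPolynomial σ R) : pderivFold L (Pi.single k 1) p = pderiv k p := by
  induction L with
  | nil => simp at hk
  | cons i L ih =>
    rw [List.nodup_cons] at hL
    obtain rfl | hik := eq_or_ne i k
    · rw [pderivFold_cons, pderivFold_eq_self (fun j hj => Pi.single_eq_of_ne
        (by rintro rfl; exact hL.1 hj) _), Pi.single_eq_same, Function.iterate_one]
    · rw [pderivFold_cons, Pi.single_eq_of_ne hik, Function.iterate_zero_apply,
        ih hL.2 ((List.mem_cons.mp hk).resolve_left hik.symm)]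

theorem X_dvd_pderivFold {k : σ} {γ : σ → ℕ} (hγ : γ k = 0) (L : List σ)
    {p : MvPolynomial σ R} (hp : X k ∣ p) : X k ∣ pderivFold L γ p := by
  induction L with
  | nil => exact hp
  | cons i L ih =>
    rw [pderivFold_cons]
    obtain rfl | hik := eq_or_ne i k
    · rwa [hγ, Function.iterate_zero_apply]
    · exact Function.Iterate.rec (X k ∣ ·) ih (fun q => X_dvd_pderiv_of_ne hik) (γ i)

end MvPolynomial

open Matrix in
theorem atMostOnePosEigenvalue_of_dotProduct_mulVec_nonpos {m : ℕ}
    {M : Matrix (Fin m) (Fin m) ℝ} (f : (Fin m → ℝ) →ₗ[ℝ] ℝ)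
    (hf : ∀ x, f x = 0 → x ⬝ᵥ M *ᵥ x ≤ 0) : AtMostOnePosEigenvalue M := by
  intro hM
  by_contra! hc
  obtain ⟨a, ha, b, hb, hab⟩ := Finset.one_lt_card.mp hc
  rw [Finset.mem_filter] at ha hb
  set u : Fin m → ℝ := ⇑(hM.eigenvectorBasis a)
  set v : Fin m → ℝ := ⇑(hM.eigenvectorBasis b)
  have hdot : ∀ p q, (⇑(hM.eigenvectorBasis p) : Fin m → ℝ) ⬝ᵥ ⇑(hM.eigenvectorBasis q)
      = if p = q then 1 else 0 := by
    intro p q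
    rw [← orthonormal_iff_ite.mp hM.eigenvectorBasis.orthonormal p q, dotProduct,
      PiLp.inner_apply]
    simp [mul_comm]
  -- a nonzero vector of the positive definite plane spanned by `u` and `v` lies in `ker f`
  obtain ⟨s, t, hst, hker⟩ : ∃ s t : ℝ, (s ≠ 0 ∨ t ≠ 0) ∧ f (s • u + t • v) = 0 := by
    by_cases hu : f u = 0
    · exact ⟨1, 0, by simp, by simp [hu]⟩
    · exact ⟨f v, -f u, Or.inr (neg_ne_zero.mpr hu), by simp [mul_comm]⟩
  have hform : (s • u + t • v) ⬝ᵥ M *ᵥ (s • u + t • v)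
      = s * s * hM.eigenvalues a + t * t * hM.eigenvalues b := by
    simp only [mulVec_add, mulVec_smul, u, v, hM.mulVec_eigenvectorBasis, dotProduct_add,
      add_dotProduct, smul_dotProduct, dotProduct_smul, hdot, if_neg hab, if_neg (Ne.symm hab),
      if_pos, smul_eq_mul]
    ring
  have := hf _ hker
  rw [hform] at this
  rcases hst with hs | ht
  · nlinarith [mul_self_pos.mpr hs, mul_self_nonneg t, ha.2, hb.2]
  · nlinarith [mul_self_pos.mpr ht, mul_self_nonneg s, ha.2, hb.2]

theorem atMostOnePosEigenvalue_zero {m : ℕ} :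
    AtMostOnePosEigenvalue (0 : Matrix (Fin m) (Fin m) ℝ) :=
  atMostOnePosEigenvalue_of_dotProduct_mulVec_nonpos 0 fun x _ => by simp

theorem atMostOnePosEigenvalue_of_apply_eq_zero {m : ℕ} {M : Matrix (Fin m) (Fin m) ℝ}
    (k : Fin m) (hM : ∀ i j, i ≠ k → j ≠ k → M i j = 0) : AtMostOnePosEigenvalue M := by
  refine atMostOnePosEigenvalue_of_dotProduct_mulVec_nonpos (LinearMap.proj k) fun x hx => ?_
  change x k = 0 at hx
  refine (Finset.sum_eq_zero fun i _ => ?_).le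
  obtain rfl | hi := eq_or_ne i k
  · rw [hx, zero_mul]
  refine mul_eq_zero_of_right _
    (show ∑ j, M i j * x j = 0 from Finset.sum_eq_zero fun j _ => ?_)
  obtain rfl | hj := eq_or_ne j k
  · rw [hx, mul_zero]
  · rw [hM i j hi hj, zero_mul]

section Normalization

variable {m : ℕ}

theorem coeff_normalizePoly (P : MvPolynomial (Fin m) ℝ) (α : Fin m →₀ ℕ) :
    (normalizePoly P).coeff α = P.coeff α / ∏ i, ((α i).factorial : ℝ) := by
  classical
  rw [normalizePoly, coeff_sum,
    Finset.sum_eq_single α (fun β _ hβ => by rw [coeff_monomial, if_neg hβ])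
      (fun hα => by rw [notMem_support_iff.mp hα, zero_div, monomial_zero, coeff_zero]),
    coeff_monomial, if_pos rfl]

theorem prod_factorial_add_single {ι : Type*} [Fintype ι] [DecidableEq ι] (β : ι →₀ ℕ) (k : ι) :
    ∏ i, ((β + Finsupp.single k 1 : ι →₀ ℕ) i).factorial
      = (β k + 1) * ∏ i, (β i).factorial := by
  have h : ∀ i, ((β + Finsupp.single k 1 : ι →₀ ℕ) i).factorial
      = (if i = k then β k + 1 else 1) * (β i).factorial := by
    intro i
    obtain rfl | hik := eq_or_ne i k
    · simp [Nat.factorial_succ]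
    · simp [Finsupp.single_eq_of_ne hik, hik]
  simp only [h, Finset.prod_mul_distrib, Finset.prod_ite_eq', Finset.mem_univ, if_true]

theorem coeff_sum_monomial_tsub_single {P : MvPolynomial (Fin m) ℝ} {k : Fin m}
    (hdiv : ∀ α ∈ P.support, 1 ≤ α k) (β : Fin m →₀ ℕ) :
    (∑ α ∈ P.support, monomial (α - Finsupp.single k 1) (P.coeff α)).coeff β
      = P.coeff (β + Finsupp.single k 1) := by
  classical
  rw [coeff_sum, Finset.sum_eq_single (β + Finsupp.single k 1), add_tsub_cancel_right,
    coeff_monomial, if_pos rfl]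
  · intro α hα hne
    refine (coeff_monomial _ _ _).trans (if_neg fun h => hne ?_)
    rw [← h, tsub_add_cancel_of_le (Finsupp.single_le_iff.mpr (hdiv α hα))]
  · intro h
    rw [notMem_support_iff.mp h, monomial_zero, coeff_zero]

theorem normalizePoly_sum_monomial_tsub_single {P : MvPolynomial (Fin m) ℝ} {k : Fin m}
    (hdiv : ∀ α ∈ P.support, 1 ≤ α k) :
    normalizePoly (∑ α ∈ P.support, monomial (α - Finsupp.single k 1) (P.coeff α))
      = pderiv k (normalizePoly P) := by
  ext β
  have hfac : ∏ i, (((β + Finsupp.single k 1 : Fin m →₀ ℕ) i).factorial : ℝ)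
      = (β k + 1) * ∏ i, ((β i).factorial : ℝ) := by
    exact_mod_cast prod_factorial_add_single β k
  rw [coeff_normalizePoly, coeff_pderiv, coeff_normalizePoly, coeff_sum_monomial_tsub_single hdiv,
    hfac]
  field_simp

theorem normalizePoly_isHomogeneous {d : ℕ} {P : MvPolynomial (Fin m) ℝ}
    (hP : P.IsHomogeneous d) : (normalizePoly P).IsHomogeneous d := fun α hα =>
  hP (by rw [coeff_normalizePoly] at hα; exact left_ne_zero_of_mul hα)

end Normalization

section Lorentzian

variable {m : ℕ}

theorem pderivMulti_zero (P : MvPolynomial (Fin m) ℝ) : pderivMulti 0 P = P :=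
  pderivFold_eq_self (fun _ _ => rfl) P

theorem pderivMulti_add_single (γ : Fin m → ℕ) (k : Fin m) (P : MvPolynomial (Fin m) ℝ) :
    pderivMulti (γ + Pi.single k 1) P = pderivMulti γ (pderiv k P) := by
  change pderivFold _ _ _ = pderivFold _ _ _
  rw [pderivFold_add, pderivFold_single (List.nodup_finRange m) (List.mem_finRange k)]

theorem X_dvd_pderivMulti {k : Fin m} {γ : Fin m → ℕ} (hγ : γ k = 0)
    {P : MvPolynomial (Fin m) ℝ} (hP : X k ∣ P) : X k ∣ pderivMulti γ P :=
  X_dvd_pderivFold hγ _ hP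

theorem hess_apply (P : MvPolynomial (Fin m) ℝ) (i j : Fin m) :
    hess P i j = P.coeff (Finsupp.single i 1 + Finsupp.single j 1)
      * ((Finsupp.single i 1 : Fin m →₀ ℕ) j + 1) := by
  simp [hess, coeff_pderiv]

theorem hess_eq_zero_of_isHomogeneous {n : ℕ} {P : MvPolynomial (Fin m) ℝ}
    (hP : P.IsHomogeneous n) (hn : n ≠ 2) : hess P = 0 := by
  ext i j
  rw [hess_apply, hP.coeff_eq_zero, zero_mul, Matrix.zero_apply]
  simpa [map_add, Finsupp.degree_single] using hn.symm

theorem hess_apply_eq_zero_of_X_dvd {k i j : Fin m} {P : MvPolynomial (Fin m) ℝ}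
    (hP : X k ∣ P) (hi : i ≠ k) (hj : j ≠ k) : hess P i j = 0 := by
  rw [hess_apply, X_dvd_iff_coeff_eq_zero.mp hP _ (by simp [hi.symm, hj.symm]),
    zero_mul]

def HasLorentzianHessians (d : ℕ) (P : MvPolynomial (Fin m) ℝ) : Prop :=
  ∀ γ : Fin m → ℕ, ∑ i, γ i = d - 2 → AtMostOnePosEigenvalue (hess (pderivMulti γ P))

theorem sum_add_pi_single_one {ι : Type*} [Fintype ι] [DecidableEq ι] (γ : ι → ℕ) (k : ι) :
    ∑ i, (γ + Pi.single k 1 : ι → ℕ) i = ∑ i, γ i + 1 := by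
  simp [Finset.sum_add_distrib]

theorem HasLorentzianHessians.pderiv {d : ℕ} {P : MvPolynomial (Fin m) ℝ}
    (hP : P.IsHomogeneous d) (h : HasLorentzianHessians d P) (k : Fin m) :
    HasLorentzianHessians (d - 1) (pderiv k P) := by
  intro γ hγ
  by_cases hd : 3 ≤ d
  · rw [← pderivMulti_add_single]
    exact h _ (by rw [sum_add_pi_single_one]; omega)
  · obtain rfl : γ = 0 :=
      funext fun i => Finset.sum_eq_zero_iff.mp (by omega) i (Finset.mem_univ i)
    rw [pderivMulti_zero, hess_eq_zero_of_isHomogeneous hP.pderiv (by omega)]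
    exact atMostOnePosEigenvalue_zero

theorem HasLorentzianHessians.of_pderiv {d : ℕ} {P : MvPolynomial (Fin m) ℝ} {k : Fin m}
    (hk : X k ∣ P) (h : HasLorentzianHessians (d - 1) (MvPolynomial.pderiv k P)) :
    HasLorentzianHessians d P := by
  intro γ hγ
  by_cases hγk : γ k = 0
  · exact atMostOnePosEigenvalue_of_apply_eq_zero k fun i j hi hj =>
      hess_apply_eq_zero_of_X_dvd (X_dvd_pderivMulti hγk hk) hi hj
  · obtain ⟨γ', rfl⟩ : ∃ γ', γ = γ' + Pi.single k 1 :=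
      ⟨γ - Pi.single k 1, funext fun i => by obtain rfl | hi := eq_or_ne i k <;> simp [*]; omega⟩
    rw [pderivMulti_add_single]
    exact h γ' (by rw [sum_add_pi_single_one] at hγ; omega)

end Lorentzian

section MConvex

theorem tsub_single_add_single_add {ι : Type*} {α : ι →₀ ℕ} {i : ι} (hi : 1 ≤ α i) (j : ι)
    (δ : ι →₀ ℕ) :
    α - Finsupp.single i 1 + Finsupp.single j 1 + δ
      = α + δ - Finsupp.single i 1 + Finsupp.single j 1 := by
  rw [add_right_comm, tsub_add_eq_add_tsub (Finsupp.single_le_iff.mpr hi)]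

variable {m : ℕ}

theorem MConvexSupport.preimage_add {S : Set (Fin m →₀ ℕ)} (hS : MConvexSupport S)
    (δ : Fin m →₀ ℕ) : MConvexSupport ((· + δ) ⁻¹' S) := by
  intro α hα β hβ i hi
  obtain ⟨j, hj, hαj, hβj⟩ := hS _ hα _ hβ i (by simpa using hi)
  refine ⟨j, by simpa using hj, ?_, ?_⟩
  · rwa [Set.mem_preimage, tsub_single_add_single_add (by omega)]
  · rwa [Set.mem_preimage, tsub_single_add_single_add (by simp at hj; omega)]

theorem mConvexSupport_preimage_add_iff {S : Set (Fin m →₀ ℕ)} {δ : Fin m →₀ ℕ}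
    (hS : ∀ α ∈ S, δ ≤ α) : MConvexSupport ((· + δ) ⁻¹' S) ↔ MConvexSupport S := by
  refine ⟨fun h α hα β hβ i hi => ?_, fun h => h.preimage_add δ⟩
  obtain ⟨α, rfl⟩ : ∃ α', α = α' + δ := ⟨α - δ, (tsub_add_cancel_of_le (hS α hα)).symm⟩
  obtain ⟨β, rfl⟩ : ∃ β', β = β' + δ := ⟨β - δ, (tsub_add_cancel_of_le (hS β hβ)).symm⟩
  simp only [Finsupp.add_apply] at hi
  obtain ⟨j, hj, hαj, hβj⟩ := h α hα β hβ i (by omega)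
  refine ⟨j, by simpa using hj, ?_, ?_⟩
  · rwa [← tsub_single_add_single_add (by omega)]
  · rwa [← tsub_single_add_single_add (by omega)]

end MConvex

section Main

variable {m : ℕ}

theorem setOf_coeff_pderiv_ne_zero (k : Fin m) (P : MvPolynomial (Fin m) ℝ) :
    {β | (pderiv k P).coeff β ≠ 0} = (· + Finsupp.single k 1) ⁻¹' {α | P.coeff α ≠ 0} := by
  ext β
  simp [coeff_pderiv, Nat.cast_add_one_ne_zero]

theorem coeff_pderiv_nonneg_iff {k : Fin m} {P : MvPolynomial (Fin m) ℝ} (hP : X k ∣ P) :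
    (∀ β, 0 ≤ (pderiv k P).coeff β) ↔ ∀ α, 0 ≤ P.coeff α := by
  refine ⟨fun h α => ?_, fun h β => by rw [coeff_pderiv]; exact mul_nonneg (h _) (by positivity)⟩
  by_cases hα : α k = 0
  · rw [X_dvd_iff_coeff_eq_zero.mp hP α hα]
  · have hβ := h (α - Finsupp.single k 1)
    rw [coeff_pderiv, tsub_add_cancel_of_le (Finsupp.single_le_iff.mpr (by omega))] at hβ
    exact nonneg_of_mul_nonneg_left hβ (by positivity)

theorem lorentzian_iff_lorentzian_pderiv {d : ℕ} {k : Fin m} {P : MvPolynomial (Fin m) ℝ}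
    (hP : P.IsHomogeneous d) (hk : X k ∣ P) :
    Lorentzian d P ↔ Lorentzian (d - 1) (pderiv k P) := by
  have hsupp : ∀ α ∈ {α | P.coeff α ≠ 0}, Finsupp.single k 1 ≤ α := fun α hα =>
    Finsupp.single_le_iff.mpr (Nat.one_le_iff_ne_zero.mpr fun h => hα
      (X_dvd_iff_coeff_eq_zero.mp hk α h))
  rw [Lorentzian, Lorentzian, setOf_coeff_pderiv_ne_zero, mConvexSupport_preimage_add_iff hsupp,
    coeff_pderiv_nonneg_iff hk]
  exact ⟨fun ⟨_, h₀, hM, hH⟩ => ⟨hP.pderiv, h₀, hM, HasLorentzianHessians.pderiv hP hH k⟩,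
    fun ⟨_, h₀, hM, hH⟩ => ⟨hP, h₀, hM, HasLorentzianHessians.of_pderiv hk hH⟩⟩

end Main

/-- If every monomial of the homogeneous polynomial `P` is divisible by `w_k`,
then `N(P)` is Lorentzian iff `N(w_k⁻¹ P)` is Lorentzian. -/
theorem normalization_lorentzian_div {m d : ℕ}
    (P : MvPolynomial (Fin m) ℝ) (hP : P.IsHomogeneous d)
    (k : Fin m) (hdiv : ∀ α ∈ P.support, 1 ≤ α k)
    (Pdiv : MvPolynomial (Fin m) ℝ)
    (hPdiv : Pdiv = ∑ α ∈ P.support, monomial (α - Finsupp.single k 1) (P.coeff α)) :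
    Lorentzian d (normalizePoly P) ↔ Lorentzian (d - 1) (normalizePoly Pdiv) := by
  have hk : X k ∣ normalizePoly P := X_dvd_iff_coeff_eq_zero.mpr fun α hα => by
    rw [coeff_normalizePoly, notMem_support_iff.mp fun h => by simpa [hα] using hdiv α h,
      zero_div]
  rw [hPdiv, normalizePoly_sum_monomial_tsub_single hdiv]
  exact lorentzian_iff_lorentzian_pderiv (normalizePoly_isHomogeneous hP) hk
end

section
/- For a one-variable polynomial P with nonnegative real coefficients and nonzero leading coefficient of degree d, the sequence of coefficients of P is log-concave if and only if the normalized homogenization N(Homog(P)) is a Lorentzian polynomial in two variables. -/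
open MvPolynomial

/-!
The coefficient of `t^k z^(d-k)` in `N(Homog(P))` is `c_k / (k! (d-k)!)`. Hence its support is
`{(k, d-k) | c_k ≠ 0}`, and a set of lattice points on the segment `x + y = d` is M-convex exactly
when it has no gaps. Differentiating `a` times in `t` and `d-2-a` times in `z`, the falling
factorials cancel the normalization and leave a quadratic form with Hessian
`[[c_{a+2}, c_{a+1}], [c_{a+1}, c_a]]`. A symmetric `2 × 2` matrix has two positive eigenvalues iff
its determinant and trace are positive; with nonnegative entries this fails iff
`c_a c_{a+2} ≤ c_{a+1}^2`.
-/

namespace MvPolynomial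

theorem coeff_iterate_pderiv {R σ : Type*} [CommSemiring R] (i : σ) (n : ℕ)
    (p : MvPolynomial σ R) (m : σ →₀ ℕ) :
    coeff m ((pderiv i)^[n] p) =
      coeff (m + Finsupp.single i n) p * (m i + n).descFactorial n := by
  induction n generalizing m with
  | zero => simp
  | succ n ih =>
    rw [Function.iterate_succ_apply', coeff_pderiv, ih, add_assoc, ← Finsupp.single_add,
      Finsupp.add_apply, Finsupp.single_eq_same, add_comm 1 n,
      show m i + (n + 1) = m i + 1 + n by omega, Nat.descFactorial_succ, Nat.add_sub_cancel]
    push_cast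
    ring

end MvPolynomial

theorem pderivMulti_fin_two (γ : Fin 2 → ℕ) (P : MvPolynomial (Fin 2) ℝ) :
    pderivMulti γ P = (pderiv 0)^[γ 0] ((pderiv 1)^[γ 1] P) := rfl

theorem mConvexSupport_fin_two_iff (d : ℕ) (T : Set ℕ) :
    MConvexSupport {α : Fin 2 →₀ ℕ | α 0 + α 1 = d ∧ α 0 ∈ T} ↔
      ∀ i j k, i ≤ j → j ≤ k → k ≤ d → i ∈ T → k ∈ T → j ∈ T := by
  constructor
  · intro hS i j k hij hjk hkd hi hk
    have succ_mem : ∀ i < k, i ∈ T → i + 1 ∈ T := by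
      intro i hik hi
      obtain ⟨l, hl, -, hβ⟩ := hS
        (Finsupp.single 0 k + Finsupp.single 1 (d - k)) ⟨by simp [Nat.add_sub_cancel' hkd], by simpa⟩
        (Finsupp.single 0 i + Finsupp.single 1 (d - i))
        ⟨by simp [Nat.add_sub_cancel' (hik.le.trans hkd)], by simpa⟩ 0 (by simpa)
      fin_cases l
      · exact absurd (by simpa using hl : k < i) hik.not_gt
      · simpa using hβ.2
    induction j, hij using Nat.le_induction with
    | base => exact hi
    | succ j hij ih => exact succ_mem j (by omega) (ih (by omega))
  · rintro h α ⟨hα, hαT⟩ β ⟨hβ, hβT⟩ i hi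
    fin_cases i <;> [refine ⟨1, ?_, ⟨?_, ?_⟩, ⟨?_, ?_⟩⟩; refine ⟨0, ?_, ⟨?_, ?_⟩, ⟨?_, ?_⟩⟩] <;>
      simp only [Fin.zero_eta, Fin.mk_one, Finsupp.coe_add, Finsupp.coe_tsub, Pi.add_apply,
        Pi.sub_apply, Finsupp.single_eq_same, Finsupp.single_eq_of_ne zero_ne_one,
        Finsupp.single_eq_of_ne one_ne_zero, add_zero, tsub_zero] at hi ⊢
    all_goals first
      | omega
      | exact h (β 0) _ (α 0) (by omega) (by omega) (by omega) hβT hαT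
      | exact h (α 0) _ (β 0) (by omega) (by omega) (by omega) hαT hβT

theorem Matrix.IsHermitian.atMostOnePosEigenvalue_iff {M : Matrix (Fin 2) (Fin 2) ℝ}
    (hM : M.IsHermitian) : AtMostOnePosEigenvalue M ↔ ¬ (0 < M.det ∧ 0 < M.trace) := by
  set μ := hM.eigenvalues
  have hdet : M.det = μ 0 * μ 1 := by
    simp [μ, hM.det_eq_prod_eigenvalues, Fin.prod_univ_two]
  have htrace : M.trace = μ 0 + μ 1 := by
    simp [μ, hM.trace_eq_sum_eigenvalues, Fin.sum_univ_two]
  have hcard : (Finset.univ.filter fun i => 0 < μ i).card ≤ 1 ↔ ¬ (0 < μ 0 ∧ 0 < μ 1) := by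
    rw [Finset.card_filter, Fin.sum_univ_two]
    split_ifs <;> simp_all
  rw [AtMostOnePosEigenvalue, forall_prop_of_true hM, hcard, hdet, htrace]
  refine not_congr ⟨fun ⟨h0, h1⟩ => ⟨mul_pos h0 h1, add_pos h0 h1⟩, fun ⟨hprod, hsum⟩ => ?_⟩
  constructor <;> nlinarith

theorem Matrix.isHermitian_fin_two_of (A B C : ℝ) : (!![A, B; B, C]).IsHermitian := by
  ext i j
  fin_cases i <;> fin_cases j <;> simp

theorem atMostOnePosEigenvalue_fin_two_iff {A B C : ℝ} (hA : 0 ≤ A) :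
    AtMostOnePosEigenvalue !![A, B; B, C] ↔ A * C ≤ B ^ 2 := by
  rw [(Matrix.isHermitian_fin_two_of A B C).atMostOnePosEigenvalue_iff, Matrix.det_fin_two_of,
    Matrix.trace_fin_two_of, not_and, sub_pos, not_lt]
  constructor
  · intro h
    by_contra hlt
    nlinarith [h (by nlinarith), sq_nonneg B]
  · intro h hlt
    nlinarith

/-- `N(Homog(P))` for `P = Σ c_k t^k` of degree `d`, with `t = X 0` and `z = X 1`. -/
noncomputable def normalizedHomog (d : ℕ) (c : ℕ → ℝ) : MvPolynomial (Fin 2) ℝ :=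
  ∑ k ∈ Finset.range (d + 1), monomial (Finsupp.single 0 k + Finsupp.single 1 (d - k))
    (c k / ((k.factorial : ℝ) * ((d - k).factorial : ℝ)))

theorem coeff_normalizedHomog (d : ℕ) (c : ℕ → ℝ) (α : Fin 2 →₀ ℕ) :
    coeff α (normalizedHomog d c) =
      if α 0 + α 1 = d then c (α 0) / ((α 0).factorial * (α 1).factorial) else 0 := by
  have hexp : ∀ k ∈ Finset.range (d + 1),
      (Finsupp.single 0 k + Finsupp.single 1 (d - k) = α ↔ α 0 + α 1 = d ∧ α 0 = k) := by
    intro k hk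
    rw [Finset.mem_range] at hk
    rw [Finsupp.ext_iff, Fin.forall_fin_two]
    simp only [Finsupp.add_apply, Finsupp.single_eq_same, Finsupp.single_eq_of_ne zero_ne_one,
      Finsupp.single_eq_of_ne one_ne_zero]
    omega
  simp only [normalizedHomog, coeff_sum, coeff_monomial]
  rw [Finset.sum_congr rfl fun k hk => if_congr (hexp k hk) rfl rfl]
  split_ifs with h
  · simp only [h, true_and]
    rw [Finset.sum_ite_eq_of_mem _ _ _ (Finset.mem_range.2 (by omega)), ← h,
      Nat.add_sub_cancel_left]
  · simp [h]

theorem isHomogeneous_normalizedHomog (d : ℕ) (c : ℕ → ℝ) :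
    (normalizedHomog d c).IsHomogeneous d :=
  IsHomogeneous.sum _ _ _ fun k hk => isHomogeneous_monomial _ <| by
    rw [Finset.mem_range] at hk
    simp only [map_add, Finsupp.degree_single]
    omega

theorem coeff_normalizedHomog_nonneg {d : ℕ} {c : ℕ → ℝ} (hc : ∀ k, 0 ≤ c k) (α : Fin 2 →₀ ℕ) :
    0 ≤ coeff α (normalizedHomog d c) := by
  rw [coeff_normalizedHomog]
  split_ifs
  · exact div_nonneg (hc _) (by positivity)
  · exact le_rfl

theorem coeff_normalizedHomog_ne_zero_iff (d : ℕ) (c : ℕ → ℝ) (α : Fin 2 →₀ ℕ) :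
    coeff α (normalizedHomog d c) ≠ 0 ↔ α 0 + α 1 = d ∧ c (α 0) ≠ 0 := by
  rw [coeff_normalizedHomog]
  split_ifs with h
  · simp [h, Nat.factorial_ne_zero]
  · simp [h]

theorem hess_pderivMulti_normalizedHomog (d : ℕ) (c : ℕ → ℝ) (γ : Fin 2 → ℕ)
    (hγ : γ 0 + γ 1 + 2 = d) :
    hess (pderivMulti γ (normalizedHomog d c)) =
      !![c (γ 0 + 2), c (γ 0 + 1); c (γ 0 + 1), c (γ 0)] := by
  ext i j
  fin_cases i <;> fin_cases j <;>
    simp only [hess, pderivMulti_fin_two, coeff_pderiv, coeff_iterate_pderiv, coeff_normalizedHomog,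
      Finsupp.coe_add, Finsupp.coe_zero, Pi.add_apply, Pi.zero_apply, Finsupp.single_eq_same,
      Finsupp.single_eq_of_ne zero_ne_one, Finsupp.single_eq_of_ne one_ne_zero, zero_add, add_zero,
      ite_mul, zero_mul, mul_one, CharP.cast_eq_zero, Nat.cast_one, Fin.zero_eta, Fin.mk_one,
      Fin.isValue, Matrix.of_apply, Matrix.cons_val', Matrix.cons_val_zero, Matrix.cons_val_one,
      Matrix.cons_val_fin_one] <;>
    rw [if_pos (by omega)] <;>
    simp only [← Nat.factorial_mul_ascFactorial, Nat.add_descFactorial_eq_ascFactorial,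
      Nat.descFactorial_self, Nat.cast_mul] <;>
    field_simp <;>
    ring_nf

theorem hessCondition_normalizedHomog_iff {d : ℕ} (hd : 2 ≤ d) {c : ℕ → ℝ} (hc : ∀ k, 0 ≤ c k) :
    (∀ γ : Fin 2 → ℕ, ∑ i, γ i = d - 2 →
        AtMostOnePosEigenvalue (hess (pderivMulti γ (normalizedHomog d c)))) ↔
      ∀ a, a + 2 ≤ d → c a * c (a + 2) ≤ c (a + 1) ^ 2 := by
  have key : ∀ γ : Fin 2 → ℕ, γ 0 + γ 1 + 2 = d →
      (AtMostOnePosEigenvalue (hess (pderivMulti γ (normalizedHomog d c))) ↔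
        c (γ 0) * c (γ 0 + 2) ≤ c (γ 0 + 1) ^ 2) := by
    intro γ hγ
    rw [hess_pderivMulti_normalizedHomog d c γ hγ, atMostOnePosEigenvalue_fin_two_iff (hc _),
      mul_comm]
  simp only [Fin.sum_univ_two]
  constructor
  · intro h a ha
    have hγ : (![a, d - 2 - a] : Fin 2 → ℕ) 0 + ![a, d - 2 - a] 1 + 2 = d := by
      simp only [Matrix.cons_val_zero, Matrix.cons_val_one, Matrix.cons_val_fin_one]
      omega
    exact (key _ hγ).1 (h _ (by omega))
  · intro h γ hγ
    exact (key γ (by omega)).2 (h (γ 0) (by omega))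

theorem logConcave_iff_lorentzian_general (d : ℕ) (hd2 : 2 ≤ d) (c : ℕ → ℝ)
    (hnonneg : ∀ k, 0 ≤ c k)
    (Q : MvPolynomial (Fin 2) ℝ)
    (hQ : Q = ∑ k ∈ Finset.range (d + 1),
      monomial (Finsupp.single 0 k + Finsupp.single 1 (d - k))
        (c k / ((k.factorial : ℝ) * ((d - k).factorial : ℝ)))) :
    ((∀ a : ℕ, a + 2 ≤ d → c a * c (a + 2) ≤ (c (a + 1)) ^ 2) ∧
      (∀ i j k : ℕ, i ≤ j → j ≤ k → k ≤ d → c i ≠ 0 → c k ≠ 0 → c j ≠ 0)) ↔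
    Lorentzian d Q := by
  obtain rfl : Q = normalizedHomog d c := hQ
  have support_eq : {α | coeff α (normalizedHomog d c) ≠ 0} =
      {α : Fin 2 →₀ ℕ | α 0 + α 1 = d ∧ α 0 ∈ {k | c k ≠ 0}} :=
    Set.ext (coeff_normalizedHomog_ne_zero_iff d c)
  rw [Lorentzian, support_eq, mConvexSupport_fin_two_iff,
    hessCondition_normalizedHomog_iff hd2 hnonneg]
  simp only [isHomogeneous_normalizedHomog, coeff_normalizedHomog_nonneg hnonneg, implies_true,
    true_and]
  exact and_comm

/-- For a one-variable polynomial `P(t) = Σ_{k=0}^d c_k t^k` with nonnegative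
coefficients and `c d ≠ 0`, the coefficient sequence is log-concave with no
internal zeros iff the normalized homogenization `N(Homog(P))` is Lorentzian. -/
theorem logConcave_iff_lorentzian (d : ℕ) (hd2 : 2 ≤ d) (c : ℕ → ℝ)
    (hnonneg : ∀ k, 0 ≤ c k) (hd : c d ≠ 0)
    (Q : MvPolynomial (Fin 2) ℝ)
    (hQ : Q = ∑ k ∈ Finset.range (d + 1),
      monomial (Finsupp.single 0 k + Finsupp.single 1 (d - k))
        (c k / ((k.factorial : ℝ) * ((d - k).factorial : ℝ)))) :
    ((∀ a : ℕ, a + 2 ≤ d → c a * c (a + 2) ≤ (c (a + 1)) ^ 2) ∧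
      (∀ i j k : ℕ, i ≤ j → j ≤ k → k ≤ d → c i ≠ 0 → c k ≠ 0 → c j ≠ 0)) ↔
    Lorentzian d Q :=
  logConcave_iff_lorentzian_general d hd2 c hnonneg Q hQ
end
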